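/- arXiv:1809.00147 — 4 statements merged into one kernel-verified Lean document; each statement's English description precedes it below -/
import Mathlib

section
/- For a strictly increasing sequence β_n → ∞ and equilibrium states μ_n ∈ ES(β_n φ), one has lim_{n→∞} ∫φ dμ_n = b_φ, where b_φ = max{∫φ dμ : μ ∈ M}. -/
open MeasureTheory

/-- The set of `f`-invariant Borel probability measures. -/
def invM {X : Type*} [MeasurableSpace X] (f : X → X) : Set (Measure X) :=
  {μ | IsProbabilityMeasure μ ∧ μ.map f = μ}

/-- Equilibrium states of `ψ`: measures maximizing `h ν + ∫ ψ dν` over invariant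
probability measures, where `h` is the (abstract) entropy function. -/
def eqStates {X : Type*} [MeasurableSpace X] (f : X → X) (h : Measure X → ℝ)
    (ψ : X → ℝ) : Set (Measure X) :=
  {μ ∈ invM f | ∀ ν ∈ invM f, h ν + ∫ x, ψ x ∂ν ≤ h μ + ∫ x, ψ x ∂μ}

/-- For a strictly increasing positive sequence `β_n → ∞` and equilibrium
states `μ_n ∈ ES(β_n φ)`, one has `lim_{n→∞} ∫ φ dμ_n = b_φ`, where
`b_φ = max {∫ φ dμ : μ ∈ M}`.  The entropy map `h` is nonnegative and bounded above
(finite topological entropy). -/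
theorem statement4 {X : Type*} [MetricSpace X] [CompactSpace X]
    [MeasurableSpace X] [BorelSpace X]
    (f : X → X) (hf : Continuous f)
    (h : Measure X → ℝ)
    (hnn : ∀ μ ∈ invM f, 0 ≤ h μ)
    (htopfin : BddAbove (h '' invM f))
    (φ : C(X, ℝ)) (bφ : ℝ)
    (hb : IsGreatest ((fun μ : Measure X => ∫ x, φ x ∂μ) '' invM f) bφ)
    (β : ℕ → ℝ) (hβpos : ∀ n, 0 < β n) (hβmono : StrictMono β)
    (hβtop : Filter.Tendsto β Filter.atTop Filter.atTop)
    (μseq : ℕ → Measure X)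
    (hES : ∀ n, μseq n ∈ eqStates f h (fun x => β n * φ x)) :
    Filter.Tendsto (fun n => ∫ x, φ x ∂(μseq n)) Filter.atTop (nhds bφ) := by
  obtain ⟨ν, hν, hνeq⟩ := hb.1
  obtain ⟨C, hC⟩ := htopfin
  have hCnn : 0 ≤ C := le_trans (hnn ν hν) (hC ⟨ν, hν, rfl⟩)
  have hupper : ∀ n, ∫ x, φ x ∂(μseq n) ≤ bφ := fun n =>
    hb.2 ⟨μseq n, (hES n).1, rfl⟩
  have hlower : ∀ n, bφ - C / β n ≤ ∫ x, φ x ∂(μseq n) := by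
    intro n
    have key := (hES n).2 ν hν
    simp only [MeasureTheory.integral_const_mul] at key
    simp only [] at hνeq
    rw [show ∫ (a : X), φ a ∂ν = bφ from hνeq] at key
    have hμC : h (μseq n) ≤ C := hC ⟨μseq n, (hES n).1, rfl⟩
    have hνnn : 0 ≤ h ν := hnn ν hν
    have hβ := hβpos n
    have h1 : bφ - ∫ x, φ x ∂(μseq n) ≤ C / β n :=
      (le_div_iff₀ hβ).mpr (by nlinarith)
    linarith
  have hzero : Filter.Tendsto (fun n => C / β n) Filter.atTop (nhds 0) :=
    Filter.Tendsto.div_atTop tendsto_const_nhds hβtop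
  have hlow : Filter.Tendsto (fun n => bφ - C / β n) Filter.atTop (nhds bφ) := by
    have := Filter.Tendsto.sub (tendsto_const_nhds (x := bφ)) hzero
    simpa using this
  exact tendsto_of_tendsto_of_tendsto_of_le_of_le hlow tendsto_const_nhds
    hlower hupper
end

section
/- Any weak* accumulation point μ of a sequence of equilibrium states μ_n ∈ ES(β_n φ) with β_n → ∞ (i.e., any ground state of φ) satisfies h_μ(f) = h_{∞,φ}, where h_{∞,φ} = sup{h_ν(f) : ν maximizes ∫φ dν over M}. -/
open MeasureTheory

/-- The set of `f`-invariant Borel probability measures. -/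
def invP {X : Type*} [TopologicalSpace X] [MeasurableSpace X] (f : X → X) :
    Set (ProbabilityMeasure X) :=
  {μ | (μ : Measure X).map f = (μ : Measure X)}

/-- Equilibrium states of `ψ` for the (abstract) entropy function `h`. -/
def eqStatesP {X : Type*} [TopologicalSpace X] [MeasurableSpace X] (f : X → X)
    (h : ProbabilityMeasure X → ℝ) (ψ : X → ℝ) : Set (ProbabilityMeasure X) :=
  {μ ∈ invP f | ∀ ν ∈ invP f,
    h ν + ∫ x, ψ x ∂(ν : Measure X) ≤ h μ + ∫ x, ψ x ∂(μ : Measure X)}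

open Filter

/-!
Along a subsequence converging to `μ`, upper semicontinuity gives `h μₙ < h μ + ε` and continuity
of `∫ φ` gives `∫ φ dμₙ ≈ ∫ φ dμ`. Testing the equilibrium inequality of `μₙ` against a maximizing
measure `ν` yields `βₙ (b - ∫ φ dμₙ) ≤ h μₙ - h ν`: the right side is bounded above while `βₙ → ∞`,
so `μ` is maximizing, and since `∫ φ dν = b ≥ ∫ φ dμₙ` it also yields `h ν ≤ h μₙ < h μ + ε`.
-/

namespace ZeroTemperature

variable {S ι : Type*} {s : Set S} {h I : S → ℝ} {b β : ℝ} {μ' ν : S}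

/-- `μ' ∈ ES(β φ)` in the abstract, with `h` the entropy and `I ν` standing for `∫ φ dν`. -/
def IsEquilibrium (s : Set S) (h I : S → ℝ) (β : ℝ) (μ' : S) : Prop :=
  μ' ∈ s ∧ ∀ ν ∈ s, h ν + β * I ν ≤ h μ' + β * I μ'

lemma IsEquilibrium.mul_sub_le (hμ' : IsEquilibrium s h I β μ') (hν : ν ∈ s) (hIν : I ν = b) :
    β * (b - I μ') ≤ h μ' - h ν := by
  have := hμ'.2 ν hν
  rw [hIν] at this
  linarith

lemma IsEquilibrium.le_of_isMax (hμ' : IsEquilibrium s h I β μ') (hβ : 0 ≤ β)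
    (hb : IsGreatest (I '' s) b) (hν : ν ∈ s) (hIν : I ν = b) : h ν ≤ h μ' := by
  have hIμ' : I μ' ≤ b := hb.2 ⟨μ', hμ'.1, rfl⟩
  linarith [hμ'.mul_sub_le hν hIν, mul_nonneg hβ (sub_nonneg.2 hIμ')]

variable [TopologicalSpace S] {l : Filter ι} {βs : ι → ℝ} {μs : ι → S} {μ : S}

lemma frequently_lt_add_and_lt_add (husc : UpperSemicontinuousOn h s) (hI : ContinuousAt I μ)
    (hμ : μ ∈ s) (hμs : ∀ i, μs i ∈ s) (hcluster : MapClusterPt μ l μs) {ε : ℝ} (hε : 0 < ε) :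
    ∃ᶠ i in l, h (μs i) < h μ + ε ∧ I (μs i) < I μ + ε := by
  have hh : ∀ᶠ ν in nhds μ, ν ∈ s → h ν < h μ + ε :=
    eventually_nhdsWithin_iff.1 (husc μ hμ _ (lt_add_of_pos_right _ hε))
  have hI' : ∀ᶠ ν in nhds μ, I ν < I μ + ε := hI.eventually (gt_mem_nhds (lt_add_of_pos_right _ hε))
  exact (mapClusterPt_iff_frequently.1 hcluster _ (hh.and hI')).mono
    fun i hi ↦ ⟨hi.1 (hμs i), hi.2⟩

variable (husc : UpperSemicontinuousOn h s) (hI : ContinuousAt I μ) (hb : IsGreatest (I '' s) b)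
  (hβs : Tendsto βs l atTop) (hES : ∀ i, IsEquilibrium s h I (βs i) (μs i)) (hμ : μ ∈ s)
  (hcluster : MapClusterPt μ l μs)
include husc hI hb hβs hES hμ hcluster

theorem eq_of_mapClusterPt_equilibria : I μ = b := by
  refine le_antisymm (hb.2 ⟨μ, hμ, rfl⟩) (not_lt.1 fun hlt ↦ ?_)
  obtain ⟨ν₀, hν₀, hIν₀⟩ := hb.1
  have hε : 0 < (b - I μ) / 2 := by linarith
  have hlarge : ∀ᶠ i in l, h μ + (b - I μ) / 2 - h ν₀ < βs i * ((b - I μ) / 2) ∧ 0 < βs i :=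
    ((hβs.atTop_mul_const hε).eventually_gt_atTop _).and (hβs.eventually_gt_atTop 0)
  obtain ⟨i, ⟨hhi, hIi⟩, hβi, hβi₀⟩ :=
    ((frequently_lt_add_and_lt_add husc hI hμ (fun i ↦ (hES i).1) hcluster hε).and_eventually
      hlarge).exists
  have hdeficit : βs i * (b - I (μs i)) < βs i * ((b - I μ) / 2) := by
    linarith [(hES i).mul_sub_le hν₀ hIν₀]
  linarith [lt_of_mul_lt_mul_left hdeficit hβi₀.le]

theorem eq_sSup_of_mapClusterPt_equilibria : h μ = sSup (h '' {ν ∈ s | I ν = b}) := by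
  have hμmax : I μ = b := eq_of_mapClusterPt_equilibria husc hI hb hβs hES hμ hcluster
  refine (IsGreatest.csSup_eq (s := h '' {ν ∈ s | I ν = b}) ⟨⟨μ, ⟨hμ, hμmax⟩, rfl⟩, ?_⟩).symm
  rintro _ ⟨ν, ⟨hν, hIν⟩, rfl⟩
  refine le_of_forall_pos_lt_add fun ε hε ↦ ?_
  obtain ⟨i, ⟨hhi, -⟩, hβi⟩ :=
    ((frequently_lt_add_and_lt_add husc hI hμ (fun i ↦ (hES i).1) hcluster hε).and_eventually
      (hβs.eventually_ge_atTop 0)).exists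
  exact ((hES i).le_of_isMax hβi hb hν hIν).trans_lt hhi

end ZeroTemperature

theorem statement5_general {X : Type*} [MetricSpace X] [CompactSpace X]
    [MeasurableSpace X] [BorelSpace X]
    (f : X → X)
    (h : ProbabilityMeasure X → ℝ)
    (husc : UpperSemicontinuousOn h (invP f))
    (φ : C(X, ℝ)) (bφ : ℝ)
    (hb : IsGreatest ((fun μ : ProbabilityMeasure X => ∫ x, φ x ∂(μ : Measure X)) '' invP f) bφ)
    (β : ℕ → ℝ)
    (hβtop : Filter.Tendsto β Filter.atTop Filter.atTop)
    (μseq : ℕ → ProbabilityMeasure X)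
    (hES : ∀ n, μseq n ∈ eqStatesP f h (fun x => β n * φ x))
    (μ : ProbabilityMeasure X) (hμ : μ ∈ invP f)
    (hcluster : MapClusterPt μ Filter.atTop μseq) :
    h μ = sSup (h '' {ν ∈ invP f | ∫ x, φ x ∂(ν : Measure X) = bφ}) := by
  have hES' : ∀ n, ZeroTemperature.IsEquilibrium (invP f) h
      (fun ν : ProbabilityMeasure X ↦ ∫ x, φ x ∂(ν : Measure X)) (β n) (μseq n) := fun n ↦
    ⟨(hES n).1, fun ν hν ↦ by simpa only [integral_const_mul] using (hES n).2 ν hν⟩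
  exact ZeroTemperature.eq_sSup_of_mapClusterPt_equilibria husc
    (ProbabilityMeasure.continuous_integral_continuousMap φ).continuousAt hb hβtop hES' hμ hcluster

/-- Any weak* accumulation point `μ` of a sequence of equilibrium states
`μ_n ∈ ES(β_n φ)` with `β_n → ∞` (i.e. any ground state of `φ`) satisfies
`h_μ(f) = h_{∞,φ}`, where `h_{∞,φ} = sup {h_ν(f) : ν maximizes ∫ φ dν over M}`.
The entropy map is assumed upper semi-continuous (e.g. an SFT). -/
theorem statement5 {X : Type*} [MetricSpace X] [CompactSpace X]
    [MeasurableSpace X] [BorelSpace X]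
    (f : X → X) (hf : Continuous f)
    (h : ProbabilityMeasure X → ℝ)
    (husc : UpperSemicontinuousOn h (invP f))
    (φ : C(X, ℝ)) (bφ : ℝ)
    (hb : IsGreatest ((fun μ : ProbabilityMeasure X => ∫ x, φ x ∂(μ : Measure X)) '' invP f) bφ)
    (β : ℕ → ℝ) (hβpos : ∀ n, 0 < β n)
    (hβtop : Filter.Tendsto β Filter.atTop Filter.atTop)
    (μseq : ℕ → ProbabilityMeasure X)
    (hES : ∀ n, μseq n ∈ eqStatesP f h (fun x => β n * φ x))
    (μ : ProbabilityMeasure X) (hμ : μ ∈ invP f)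
    (hcluster : MapClusterPt μ Filter.atTop μseq) :
    h μ = sSup (h '' {ν ∈ invP f | ∫ x, φ x ∂(ν : Measure X) = bφ}) :=
  statement5_general f h husc φ bφ hb β hβtop μseq hES μ hμ hcluster
end

section
/- The localized entropy function H(w) = sup{h_μ(f) : ∫φ dμ = w} is upper semi-continuous on I(φ); since it is also concave on a compact interval, it is continuous on I(φ). -/
/-!
Write `Φ μ = ∫ φ dμ` and `H` for the supremum of `h` over the fibres of `Φ` in the compact set `M`
of invariant measures. Since `h` is upper semicontinuous, the supremum over each (compact) fibre
is attained. If `H w < y`, the compact set `{μ ∈ M | y ≤ h μ}` has a compact image under `Φ` that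
misses `w`, so `H < y` near `w`: this is upper semicontinuity. Mixing maximizers over `w₁` and
`w₂` gives an invariant measure over `t w₁ + (1 - t) w₂`, and affinity of `h` makes `H` concave.
A concave function on a compact interval lies above its chords from any point to the two
endpoints, hence is lower semicontinuous, and so `H` is continuous.
-/

open MeasureTheory

open Filter Topology Set

section FiberSup

variable {α β : Type*} {K : Set α} {Φ : α → β} {h : α → ℝ} {w : β}

noncomputable def fiberSup (K : Set α) (Φ : α → β) (h : α → ℝ) (w : β) : ℝ :=
  sSup (h '' {μ ∈ K | Φ μ = w})

theorem le_fiberSup (hbdd : BddAbove (h '' K)) {μ : α} (hμ : μ ∈ K) :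
    h μ ≤ fiberSup K Φ h (Φ μ) :=
  le_csSup (hbdd.mono (image_mono fun _ hν => hν.1)) ⟨μ, ⟨hμ, rfl⟩, rfl⟩

variable [TopologicalSpace α] [TopologicalSpace β]

theorem exists_fiberSup_eq [T1Space β] (hK : IsCompact K) (hΦ : Continuous Φ)
    (hh : UpperSemicontinuousOn h K) (hw : w ∈ Φ '' K) :
    ∃ μ ∈ K, Φ μ = w ∧ fiberSup K Φ h w = h μ := by
  have hfib : IsCompact {μ ∈ K | Φ μ = w} := hK.inter_right (isClosed_singleton.preimage hΦ)
  obtain ⟨ν, hν, rfl⟩ := hw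
  have hne : {μ ∈ K | Φ μ = Φ ν}.Nonempty := ⟨ν, hν, rfl⟩
  obtain ⟨μ, ⟨hμK, hμw⟩, hmax⟩ := (hh.mono fun _ hμ => hμ.1).exists_isMaxOn hne hfib
  have hgreatest : IsGreatest (h '' {μ ∈ K | Φ μ = Φ ν}) (h μ) :=
    ⟨mem_image_of_mem h ⟨hμK, hμw⟩, forall_mem_image.2 fun _ hμ' => isMaxOn_iff.1 hmax _ hμ'⟩
  exact ⟨μ, hμK, hμw, hgreatest.csSup_eq⟩

theorem upperSemicontinuousOn_fiberSup [T2Space β] (hK : IsCompact K) (hΦ : Continuous Φ)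
    (hh : UpperSemicontinuousOn h K) : UpperSemicontinuousOn (fiberSup K Φ h) (Φ '' K) := by
  intro w hw y hy
  have hclosed : IsClosed (Φ '' (K ∩ h ⁻¹' Ici y)) :=
    ((hh.isCompact_inter_preimage_Ici hK y).image hΦ).isClosed
  have hw_notMem : w ∉ Φ '' (K ∩ h ⁻¹' Ici y) := by
    rintro ⟨μ, ⟨hμK, hμy⟩, rfl⟩
    exact (hy.trans_le hμy).not_ge (le_fiberSup (hh.bddAbove_of_isCompact hK) hμK)
  filter_upwards [nhdsWithin_le_nhds (hclosed.isOpen_compl.mem_nhds hw_notMem),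
    self_mem_nhdsWithin] with x hx_notMem hx
  obtain ⟨μ, hμK, rfl, hμ⟩ := exists_fiberSup_eq hK hΦ hh hx
  rw [hμ]
  by_contra! hyμ
  exact hx_notMem ⟨μ, ⟨hμK, hyμ⟩, rfl⟩

theorem concaveOn_fiberSup {Φ : α → ℝ} (hK : IsCompact K) (hΦ : Continuous Φ)
    (hh : UpperSemicontinuousOn h K)
    (hmix : ∀ μ ∈ K, ∀ ν ∈ K, ∀ t : ℝ, 0 ≤ t → t ≤ 1 →
      ∃ σ ∈ K, Φ σ = t * Φ μ + (1 - t) * Φ ν ∧ h σ = t * h μ + (1 - t) * h ν) :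
    ConcaveOn ℝ (Φ '' K) (fiberSup K Φ h) := by
  refine ⟨?_, ?_⟩
  · rintro _ ⟨μ, hμ, rfl⟩ _ ⟨ν, hν, rfl⟩ a b ha hb hab
    obtain rfl : b = 1 - a := by linarith
    obtain ⟨σ, hσ, hΦσ, -⟩ := hmix μ hμ ν hν a ha (by linarith)
    exact ⟨σ, hσ, hΦσ⟩
  · rintro _ hw₁ _ hw₂ a b ha hb hab
    obtain rfl : b = 1 - a := by linarith
    obtain ⟨μ, hμ, rfl, hμmax⟩ := exists_fiberSup_eq hK hΦ hh hw₁
    obtain ⟨ν, hν, rfl, hνmax⟩ := exists_fiberSup_eq hK hΦ hh hw₂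
    obtain ⟨σ, hσ, hΦσ, hhσ⟩ := hmix μ hμ ν hν a ha (by linarith)
    have hσmax := le_fiberSup (Φ := Φ) (hh.bddAbove_of_isCompact hK) hσ
    rw [hΦσ, hhσ] at hσmax
    simpa only [smul_eq_mul, hμmax, hνmax] using hσmax

end FiberSup

theorem ConcaveOn.eventually_lt_nhdsWithin_segment {s : Set ℝ} {g : ℝ → ℝ}
    (hg : ConcaveOn ℝ s g) {w b y : ℝ} (hw : w ∈ s) (hb : b ∈ s) (hy : y < g w) :
    ∀ᶠ x in 𝓝[segment ℝ w b] w, y < g x := by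
  rcases eq_or_ne b w with rfl | hbw
  · simpa [segment_same] using hy
  set ℓ : ℝ → ℝ := fun x => g w + (x - w) / (b - w) * (g b - g w) with hℓ
  have hℓle : ∀ x ∈ segment ℝ w b, ℓ x ≤ g x := by
    rintro _ ⟨p, q, hp, hq, hpq, rfl⟩
    have hcoord : (p • w + q • b - w) / (b - w) = q := by
      rw [div_eq_iff (sub_ne_zero.2 hbw), smul_eq_mul, smul_eq_mul]
      linear_combination w * hpq
    calc ℓ (p • w + q • b) = p • g w + q • g b := by
          simp only [hℓ]
          rw [hcoord, smul_eq_mul, smul_eq_mul]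
          linear_combination -g w * hpq
      _ ≤ g (p • w + q • b) := hg.2 hw hb hp hq hpq
  have hyℓ : y < ℓ w := by simpa [hℓ] using hy
  have hℓcont : Continuous ℓ := by fun_prop
  filter_upwards [nhdsWithin_le_nhds (hℓcont.continuousAt.eventually (lt_mem_nhds hyℓ)),
    self_mem_nhdsWithin] with x hx hxs
  exact hx.trans_le (hℓle x hxs)

theorem ConcaveOn.lowerSemicontinuousOn {s : Set ℝ} {g : ℝ → ℝ} (hg : ConcaveOn ℝ s g)
    (hs : IsCompact s) : LowerSemicontinuousOn g s := by
  intro w hw y hy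
  have hne : s.Nonempty := ⟨w, hw⟩
  have hsub : s ⊆ segment ℝ w (sInf s) ∪ segment ℝ w (sSup s) := by
    intro x hx
    have hinf := csInf_le hs.bddBelow hx
    have hsup := le_csSup hs.bddAbove hx
    simp only [mem_union, segment_eq_uIcc, mem_uIcc]
    rcases le_total x w with hxw | hwx
    · exact Or.inl (Or.inr ⟨hinf, hxw⟩)
    · exact Or.inr (Or.inl ⟨hwx, hsup⟩)
  have hsegments := eventually_sup.2 ⟨hg.eventually_lt_nhdsWithin_segment hw (hs.sInf_mem hne) hy,
    hg.eventually_lt_nhdsWithin_segment hw (hs.sSup_mem hne) hy⟩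
  rw [← nhdsWithin_union] at hsegments
  exact nhdsWithin_mono w hsub hsegments

section InvariantMeasures

variable {X : Type*} [MeasurableSpace X]

theorem integral_convexCombination {μ ν : Measure X} {g : X → ℝ} (hμ : Integrable g μ)
    (hν : Integrable g ν) {t : ℝ} (ht₀ : 0 ≤ t) (ht₁ : t ≤ 1) :
    ∫ x, g x ∂(ENNReal.ofReal t • μ + ENNReal.ofReal (1 - t) • ν) =
      t * ∫ x, g x ∂μ + (1 - t) * ∫ x, g x ∂ν := by
  rw [integral_add_measure (hμ.smul_measure ENNReal.ofReal_ne_top)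
    (hν.smul_measure ENNReal.ofReal_ne_top), integral_smul_measure, integral_smul_measure,
    ENNReal.toReal_ofReal ht₀, ENNReal.toReal_ofReal (sub_nonneg.2 ht₁), smul_eq_mul, smul_eq_mul]

variable [TopologicalSpace X]

theorem exists_mem_invP_eq_convexCombination {f : X → X} (hf : Measurable f)
    {μ ν : ProbabilityMeasure X} (hμ : μ ∈ invP f) (hν : ν ∈ invP f) {t : ℝ} (ht₀ : 0 ≤ t)
    (ht₁ : t ≤ 1) :
    ∃ σ ∈ invP f, (σ : Measure X) =
      ENNReal.ofReal t • (μ : Measure X) + ENNReal.ofReal (1 - t) • (ν : Measure X) := by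
  have hprob : IsProbabilityMeasure
      (ENNReal.ofReal t • (μ : Measure X) + ENNReal.ofReal (1 - t) • (ν : Measure X)) := by
    constructor
    simp only [Measure.coe_add, Measure.coe_smul, Pi.add_apply, Pi.smul_apply, smul_eq_mul,
      measure_univ, mul_one, ← ENNReal.ofReal_add ht₀ (sub_nonneg.2 ht₁), add_sub_cancel,
      ENNReal.ofReal_one]
  let σ : ProbabilityMeasure X := ⟨_, hprob⟩
  refine ⟨σ, ?_, rfl⟩
  show (ENNReal.ofReal t • (μ : Measure X) + ENNReal.ofReal (1 - t) • (ν : Measure X)).map f = _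
  rw [Measure.map_add _ _ hf, Measure.map_smul, Measure.map_smul, hμ, hν]
  rfl

theorem isClosed_invP [HasOuterApproxClosed X] [BorelSpace X] {f : X → X} (hf : Continuous f) :
    IsClosed (invP f) := by
  have hinvP : invP f = {μ | μ.map hf.measurable.aemeasurable = μ} := by
    ext μ
    exact ⟨fun hμ => Subtype.ext hμ, congrArg Subtype.val⟩
  rw [hinvP]
  exact isClosed_eq (ProbabilityMeasure.continuous_map hf) continuous_id

end InvariantMeasures

theorem statement7_general {X : Type*} [MetricSpace X] [CompactSpace X]
    [MeasurableSpace X] [BorelSpace X]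
    (f : X → X) (hf : Continuous f)
    (h : ProbabilityMeasure X → ℝ)
    (husc : UpperSemicontinuousOn h (invP f))
    (haff : ∀ μ ∈ invP f, ∀ ν ∈ invP f, ∀ t : ℝ, 0 ≤ t → t ≤ 1 →
      ∀ σ : ProbabilityMeasure X,
        (σ : Measure X) = ENNReal.ofReal t • (μ : Measure X)
            + ENNReal.ofReal (1 - t) • (ν : Measure X) →
        h σ = t * h μ + (1 - t) * h ν)
    (φ : C(X, ℝ)) :
    UpperSemicontinuousOn
        (fun w => sSup (h '' {μ ∈ invP f | ∫ x, φ x ∂(μ : Measure X) = w}))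
        ((fun μ : ProbabilityMeasure X => ∫ x, φ x ∂(μ : Measure X)) '' invP f) ∧
      ContinuousOn
        (fun w => sSup (h '' {μ ∈ invP f | ∫ x, φ x ∂(μ : Measure X) = w}))
        ((fun μ : ProbabilityMeasure X => ∫ x, φ x ∂(μ : Measure X)) '' invP f) := by
  set Φ := fun μ : ProbabilityMeasure X => ∫ x, φ x ∂(μ : Measure X)
  have hΦ : Continuous Φ := ProbabilityMeasure.continuous_integral_continuousMap φ
  have hK : IsCompact (invP f) := (isClosed_invP hf).isCompact
  have hmix : ∀ μ ∈ invP f, ∀ ν ∈ invP f, ∀ t : ℝ, 0 ≤ t → t ≤ 1 →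
      ∃ σ ∈ invP f, Φ σ = t * Φ μ + (1 - t) * Φ ν ∧ h σ = t * h μ + (1 - t) * h ν := by
    intro μ hμ ν hν t ht₀ ht₁
    obtain ⟨σ, hσ, hσeq⟩ := exists_mem_invP_eq_convexCombination hf.measurable hμ hν ht₀ ht₁
    have hφ (κ : ProbabilityMeasure X) : Integrable φ (κ : Measure X) :=
      φ.continuous.integrable_of_hasCompactSupport (HasCompactSupport.of_compactSpace _)
    refine ⟨σ, hσ, ?_, haff μ hμ ν hν t ht₀ ht₁ σ hσeq⟩
    simp only [Φ, hσeq]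
    exact integral_convexCombination (hφ μ) (hφ ν) ht₀ ht₁
  have hH := upperSemicontinuousOn_fiberSup hK hΦ husc
  exact ⟨hH, continuousOn_iff_lower_upperSemicontinuousOn.2
    ⟨(concaveOn_fiberSup hK hΦ husc hmix).lowerSemicontinuousOn (hK.image hΦ), hH⟩⟩

/-- The localized entropy function
`H(w) = sup {h_μ(f) : ∫ φ dμ = w}` is upper semi-continuous on
`I(φ) = {∫ φ dμ : μ ∈ M}`; being also concave on this compact interval, it is in fact
continuous on `I(φ)`.  Here the entropy map `h` is upper semi-continuous (weak*
topology) and affine on the compact convex set `M` of invariant measures. -/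
theorem statement7 {X : Type*} [MetricSpace X] [CompactSpace X]
    [MeasurableSpace X] [BorelSpace X]
    (f : X → X) (hf : Continuous f)
    (h : ProbabilityMeasure X → ℝ)
    (husc : UpperSemicontinuousOn h (invP f))
    (haff : ∀ μ ∈ invP f, ∀ ν ∈ invP f, ∀ t : ℝ, 0 ≤ t → t ≤ 1 →
      ∀ σ : ProbabilityMeasure X,
        (σ : Measure X) = ENNReal.ofReal t • (μ : Measure X)
            + ENNReal.ofReal (1 - t) • (ν : Measure X) →
        h σ = t * h μ + (1 - t) * h ν)
    (hnn : ∀ μ ∈ invP f, 0 ≤ h μ)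
    (hbdd : BddAbove (h '' invP f))
    (φ : C(X, ℝ)) :
    UpperSemicontinuousOn
        (fun w => sSup (h '' {μ ∈ invP f | ∫ x, φ x ∂(μ : Measure X) = w}))
        ((fun μ : ProbabilityMeasure X => ∫ x, φ x ∂(μ : Measure X)) '' invP f) ∧
      ContinuousOn
        (fun w => sSup (h '' {μ ∈ invP f | ∫ x, φ x ∂(μ : Measure X) = w}))
        ((fun μ : ProbabilityMeasure X => ∫ x, φ x ∂(μ : Measure X)) '' invP f) :=
  statement7_general f hf h husc haff φ
end

section
/- Let X be the SFT on alphabet {0,1,2,3} with transitions 0↔1, 0↔2, 0↔3 only (transition matrix with A_{0j}=A_{j0}=1 for j=1,2,3 and all other entries 0). Let φ ∈ LC_2(X,ℝ) take value 2 on cylinders C_2(01) and C_2(10) and value 1 on all other nonempty 2-cylinders. Then the periodic orbit measure μ_x of x = O(01) is the unique maximizing measure of φ: ∫φ dμ_x = 2 = b_φ, and every invariant measure μ ≠ μ_x satisfies ∫φ dμ < 2. -/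
/-!
Since `φ = 1 + 𝟙[C₂(01) ∪ C₂(10)]`, every invariant probability measure has `∫ φ dμ = 1 + μ(C)`
with `C = C₂(01) ∪ C₂(10)`, so `b_φ ≤ 2`, with equality exactly when `μ(C) = 1`. By invariance
`μ` is then carried by the points whose whole forward orbit stays in `C`; such a point is
determined by its first symbol, so it is `O(01)` or its shift. An invariant measure on this
orbit of period two gives both points the same mass, hence is `μ_x`.
-/

open MeasureTheory
open scoped ENNReal

/-- The shift map on sequences. -/
def shift {A : Type*} (x : ℕ → A) : ℕ → A := fun n => x (n + 1)

/-- The periodic point `O(01) = 010101…` in the alphabet `{0,1,2,3}`. -/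
def O01' : ℕ → Fin 4 := fun n => if n % 2 = 0 then 0 else 1

open Function Set

section TwoPeriodicOrbit

variable {α : Type*} [MeasurableSpace α]

theorem half_smul_dirac_add_dirac_apply_of_mem {a b : α} {s : Set α} (ha : a ∈ s) (hb : b ∈ s) :
    ((2 : ℝ≥0∞)⁻¹ • (Measure.dirac a + Measure.dirac b)) s = 1 := by
  simp [Measure.dirac_apply_of_mem ha, Measure.dirac_apply_of_mem hb, ENNReal.inv_two_add_inv_two]

theorem isProbabilityMeasure_half_smul_dirac_add_dirac (a b : α) :
    IsProbabilityMeasure ((2 : ℝ≥0∞)⁻¹ • (Measure.dirac a + Measure.dirac b)) :=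
  ⟨half_smul_dirac_add_dirac_apply_of_mem (mem_univ a) (mem_univ b)⟩

theorem map_half_smul_dirac_add_dirac {f : α → α} (hf : Measurable f) {a : α} (ha : f (f a) = a) :
    ((2 : ℝ≥0∞)⁻¹ • (Measure.dirac a + Measure.dirac (f a))).map f =
      (2 : ℝ≥0∞)⁻¹ • (Measure.dirac a + Measure.dirac (f a)) := by
  rw [Measure.map_smul, Measure.map_add _ _ hf, Measure.map_dirac' hf, Measure.map_dirac' hf, ha,
    add_comm]

theorem eq_half_smul_dirac_add_dirac_of_ae [MeasurableSingletonClass α] {f : α → α}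
    {μ : Measure α} [IsProbabilityMeasure μ] (hf : MeasurePreserving f μ μ) {a : α}
    (ha : f (f a) = a) (hne : a ≠ f a) (hμ : ∀ᵐ x ∂μ, x = a ∨ x = f a) :
    μ = (2 : ℝ≥0∞)⁻¹ • (Measure.dirac a + Measure.dirac (f a)) := by
  have hdecomp : μ = μ {a} • Measure.dirac a + μ {f a} • Measure.dirac (f a) := by
    conv_lhs => rw [← Measure.restrict_eq_self_of_ae_mem (s := {a} ∪ {f a}) hμ]
    rw [Measure.restrict_union (disjoint_singleton.2 hne) (measurableSet_singleton _),
      Measure.restrict_singleton, Measure.restrict_singleton]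
  have hpreimage : f ⁻¹' {a} =ᵐ[μ] ({f a} : Set α) := by
    filter_upwards [hμ] with x hx
    change (f x = a) = (x = f a)
    rcases hx with rfl | rfl
    · exact propext (iff_of_false (fun h => hne h.symm) hne)
    · exact propext (iff_of_true ha rfl)
  have hequal : μ {f a} = μ {a} := by
    rw [← measure_congr hpreimage,
      hf.measure_preimage (measurableSet_singleton a).nullMeasurableSet]
  have hhalf : μ {a} = 2⁻¹ := by
    have hmass := congrArg (· univ) hdecomp
    simp only [Measure.add_apply, Measure.smul_apply, measure_univ, smul_eq_mul, mul_one,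
      hequal] at hmass
    exact ENNReal.eq_inv_of_mul_eq_one_left (by rw [mul_two, hmass])
  rw [hdecomp, hequal, hhalf, smul_add]

end TwoPeriodicOrbit

theorem measurable_shift {A : Type*} [MeasurableSpace A] :
    Measurable (shift : (ℕ → A) → ℕ → A) :=
  measurable_pi_lambda _ fun n => measurable_pi_apply (n + 1)

theorem shift_iterate_apply {A : Type*} (n : ℕ) (x : ℕ → A) (m : ℕ) :
    shift^[n] x m = x (n + m) := by
  induction n generalizing x with
  | zero => simp
  | succ n ih => rw [iterate_succ_apply, ih]; simp only [shift]; ring_nf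

theorem shift_shift_O01' : shift (shift O01') = O01' := by
  funext n
  show O01' (n + 2) = O01' n
  simp only [O01', Nat.add_mod_right]

theorem O01'_ne_shift : O01' ≠ shift O01' :=
  fun h => by simpa [O01', shift] using congrFun h 0

/-- The union of the 2-cylinders `C₂(01)` and `C₂(10)`, on which `φ` takes the value `2`. -/
def cyl01 : Set (ℕ → Fin 4) := {x | (x 0 = 0 ∧ x 1 = 1) ∨ (x 0 = 1 ∧ x 1 = 0)}

theorem measurableSet_cyl01 : MeasurableSet cyl01 := by
  unfold cyl01
  measurability

theorem O01'_mem_cyl01 : O01' ∈ cyl01 := Or.inl ⟨rfl, rfl⟩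

theorem shift_O01'_mem_cyl01 : shift O01' ∈ cyl01 := Or.inr ⟨rfl, rfl⟩

theorem apply_one_eq_of_mem_cyl01 {x y : ℕ → Fin 4} (hx : x ∈ cyl01) (hy : y ∈ cyl01)
    (h0 : x 0 = y 0) : x 1 = y 1 := by
  rcases hx with ⟨hx0, hx1⟩ | ⟨hx0, hx1⟩ <;> rcases hy with ⟨hy0, hy1⟩ | ⟨hy0, hy1⟩ <;>
    simp_all

theorem shift_iterate_O01'_mem_cyl01 (n : ℕ) : shift^[n] O01' ∈ cyl01 := by
  have hperiodic : IsPeriodicPt shift 2 O01' := shift_shift_O01'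
  rw [← hperiodic.iterate_mod_apply]
  rcases Nat.mod_two_eq_zero_or_one n with h | h <;> rw [h]
  · exact O01'_mem_cyl01
  · exact shift_O01'_mem_cyl01

theorem shift_iterate_shift_O01'_mem_cyl01 (n : ℕ) : shift^[n] (shift O01') ∈ cyl01 := by
  simpa only [← iterate_succ_apply] using shift_iterate_O01'_mem_cyl01 (n + 1)

theorem zero_alternates_of_forall_shift_iterate_mem_cyl01 {x : ℕ → Fin 4}
    (hx : ∀ n, shift^[n] x ∈ cyl01) (n : ℕ) :
    (x n = 0 ∧ x (n + 1) ≠ 0) ∨ (x n ≠ 0 ∧ x (n + 1) = 0) := by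
  have h := hx n
  simp only [cyl01, mem_ofPred_eq, shift_iterate_apply, add_zero] at h
  rcases h with ⟨h0, h1⟩ | ⟨h0, h1⟩ <;> simp [h0, h1]

theorem eq_of_forall_shift_iterate_mem_cyl01 {x y : ℕ → Fin 4}
    (hx : ∀ n, shift^[n] x ∈ cyl01) (hy : ∀ n, shift^[n] y ∈ cyl01) (h0 : x 0 = y 0) :
    x = y := by
  have hfirst : ∀ n, shift^[n] x 0 = shift^[n] y 0 := by
    intro n
    induction n with
    | zero => exact h0
    | succ n ih =>
      rw [iterate_succ_apply', iterate_succ_apply']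
      exact apply_one_eq_of_mem_cyl01 (hx n) (hy n) ih
  funext n
  simpa [shift_iterate_apply] using hfirst n

theorem eq_O01'_or_eq_shift_O01'_of_forall_shift_iterate_mem_cyl01 {x : ℕ → Fin 4}
    (hx : ∀ n, shift^[n] x ∈ cyl01) : x = O01' ∨ x = shift O01' := by
  rcases hx 0 with ⟨h0, -⟩ | ⟨h0, -⟩
  · exact Or.inl (eq_of_forall_shift_iterate_mem_cyl01 hx shift_iterate_O01'_mem_cyl01 h0)
  · exact Or.inr (eq_of_forall_shift_iterate_mem_cyl01 hx shift_iterate_shift_O01'_mem_cyl01 h0)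

theorem eq_of_measure_cyl01_eq_one {μ : Measure (ℕ → Fin 4)} [IsProbabilityMeasure μ]
    (hinv : μ.map shift = μ) (hμ : μ cyl01 = 1) :
    μ = (2 : ℝ≥0∞)⁻¹ • (Measure.dirac O01' + Measure.dirac (shift O01')) := by
  have hf : MeasurePreserving shift μ μ := ⟨measurable_shift, hinv⟩
  have hcyl : ∀ᵐ x ∂μ, x ∈ cyl01 :=
    (ae_mem_iff_measure_eq measurableSet_cyl01.nullMeasurableSet).2 (by rw [hμ, measure_univ])
  have horbit : ∀ᵐ x ∂μ, ∀ n, shift^[n] x ∈ cyl01 :=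
    ae_all_iff.2 fun n => (hf.iterate n).quasiMeasurePreserving.ae hcyl
  exact eq_half_smul_dirac_add_dirac_of_ae hf shift_shift_O01' O01'_ne_shift
    (horbit.mono fun _ => eq_O01'_or_eq_shift_O01'_of_forall_shift_iterate_mem_cyl01)

theorem integral_eq_one_add_measureReal_cyl01 {φ : (ℕ → Fin 4) → ℝ}
    (hφ : ∀ x : ℕ → Fin 4,
      φ x = if (x 0 = 0 ∧ x 1 = 1) ∨ (x 0 = 1 ∧ x 1 = 0) then 2 else 1)
    (μ : Measure (ℕ → Fin 4)) [IsProbabilityMeasure μ] :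
    ∫ x, φ x ∂μ = 1 + μ.real cyl01 := by
  classical
  have hpiecewise : φ = cyl01.piecewise (fun _ => 2) (fun _ => 1) := by
    funext x
    by_cases h : x ∈ cyl01 <;> simp only [hφ, Set.piecewise, h] <;> simp_all [cyl01]
  rw [hpiecewise, integral_piecewise measurableSet_cyl01 (integrableOn_const (measure_ne_top _ _))
    (integrableOn_const (measure_ne_top _ _))]
  simp [measureReal_compl measurableSet_cyl01]
  ring

/-- Let `X ⊂ {0,1,2,3}^ℕ` be the SFT where `0` may be followed by `1,2,3`
and `1,2,3` may only be followed by `0`, and let `φ` take value `2` on the 2-cylinders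
`C₂(01)`, `C₂(10)` and value `1` on all other nonempty 2-cylinders.  Then the periodic
orbit measure `μ_x` of `x = O(01)` is the unique maximizing measure of `φ`:
`∫ φ dμ_x = 2 = b_φ`, and every invariant measure `μ ≠ μ_x` (supported on `X`)
satisfies `∫ φ dμ < 2`. -/
theorem statement19
    (X : Set (ℕ → Fin 4))
    (hX : X = {x | ∀ n, (x n = 0 ∧ x (n + 1) ≠ 0) ∨ (x n ≠ 0 ∧ x (n + 1) = 0)})
    (φ : (ℕ → Fin 4) → ℝ)
    (hφ : ∀ x : ℕ → Fin 4,
      φ x = if (x 0 = 0 ∧ x 1 = 1) ∨ (x 0 = 1 ∧ x 1 = 0) then 2 else 1)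
    (M : Set (Measure (ℕ → Fin 4)))
    (hM : M = {μ | IsProbabilityMeasure μ ∧ μ.map shift = μ ∧ μ X = 1})
    (μx : Measure (ℕ → Fin 4))
    (hμx : μx = ((2 : ℝ≥0∞))⁻¹ • (Measure.dirac O01' + Measure.dirac (shift O01'))) :
    (∫ x, φ x ∂μx = 2) ∧
      IsGreatest {r : ℝ | ∃ μ ∈ M, r = ∫ x, φ x ∂μ} 2 ∧
      (∀ μ ∈ M, μ ≠ μx → ∫ x, φ x ∂μ < 2) := by
  subst hX hM hμx
  have hμx_prob := isProbabilityMeasure_half_smul_dirac_add_dirac O01' (shift O01')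
  have hμx_integral : ∫ x, φ x ∂((2 : ℝ≥0∞)⁻¹ •
      (Measure.dirac O01' + Measure.dirac (shift O01'))) = 2 := by
    rw [integral_eq_one_add_measureReal_cyl01 hφ, measureReal_def,
      half_smul_dirac_add_dirac_apply_of_mem O01'_mem_cyl01 shift_O01'_mem_cyl01]
    norm_num
  refine ⟨hμx_integral, ⟨⟨_, ⟨hμx_prob, map_half_smul_dirac_add_dirac measurable_shift
    shift_shift_O01', half_smul_dirac_add_dirac_apply_of_mem
      (zero_alternates_of_forall_shift_iterate_mem_cyl01 shift_iterate_O01'_mem_cyl01)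
      (zero_alternates_of_forall_shift_iterate_mem_cyl01 shift_iterate_shift_O01'_mem_cyl01)⟩,
    hμx_integral.symm⟩, ?_⟩, ?_⟩
  · rintro _ ⟨μ, ⟨hμ, -, -⟩, rfl⟩
    linarith [integral_eq_one_add_measureReal_cyl01 hφ μ,
      measureReal_le_one (μ := μ) (s := cyl01)]
  · rintro μ ⟨hμ, hinv, -⟩ hne
    have hlt : μ cyl01 < 1 :=
      prob_le_one.lt_of_ne fun h => hne (eq_of_measure_cyl01_eq_one hinv h)
    have hlt_real : μ.real cyl01 < 1 :=
      ENNReal.toReal_lt_of_lt_ofReal (by rwa [ENNReal.ofReal_one])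
    linarith [integral_eq_one_add_measureReal_cyl01 hφ μ]
end
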